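/- arXiv:2501.05364 — 2 statements merged into one kernel-verified Lean document; each statement's English description precedes it below -/
import Mathlib

section
/- Let S be a closed set of the hypercube Q_x, let n satisfy ⌊n/2⌋ ≤ x < n, and define C ⊆ V(Q_n) as the union of A = {0^(n-x) s : s ∈ S} and B = {1^(n-x) s : s ∈ S}, where juxtaposition denotes concatenation of binary strings. Then C is a closed set of Q_n. -/
/-!
Write a vertex of `Q_(k+x)` as a block of length `k = n - x` followed by a block of length `x`,
so Hamming distance is the sum of the distances of the blocks. Closedness of `S` is equivalent to
every `u ∈ S` having some element of `S` at each distance `d ≤ x`. From `b^k s` a distance `d ≤ x`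
is reached as `b^k t`, and a distance `d > x` as `(!b)^k t` with `dist(s, t) = d - k`; the
hypothesis `⌊n/2⌋ ≤ x` is exactly `k ≤ x + 1`, which makes `d - k ≤ x` and `k ≤ d` in that case.
-/

/-- A nonempty set `S` of vertices of the hypercube `Q_m` (whose graph distance is
Hamming distance) is *closed* if for every `u ∈ S` and every vertex `v` there is
`y ∈ S` with `dist(u,v) = dist(u,y)`. -/
def QClosed (m : ℕ) (S : Set (Fin m → Bool)) : Prop :=
  S.Nonempty ∧ ∀ u ∈ S, ∀ v : Fin m → Bool, ∃ y ∈ S, hammingDist u v = hammingDist u y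

open Finset

theorem hammingDist_append {α : Type*} [DecidableEq α] {k x : ℕ} (a c : Fin k → α)
    (b d : Fin x → α) :
    hammingDist (Fin.append a b) (Fin.append c d) = hammingDist a c + hammingDist b d := by
  simp only [hammingDist, card_filter, Fin.sum_univ_add, Fin.append_left, Fin.append_right]

theorem hammingDist_const_not {ι : Type*} [Fintype ι] (b : Bool) :
    hammingDist (fun _ : ι => b) (fun _ => !b) = Fintype.card ι := by
  simp [hammingDist]

theorem exists_hammingDist_eq {ι : Type*} [Fintype ι] [DecidableEq ι] (u : ι → Bool) {d : ℕ}
    (hd : d ≤ Fintype.card ι) : ∃ v, hammingDist u v = d := by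
  obtain ⟨t, -, rfl⟩ := exists_subset_card_eq (s := (univ : Finset ι)) hd
  refine ⟨fun i => if i ∈ t then !u i else u i, ?_⟩
  rw [hammingDist]
  congr 1
  ext i
  by_cases hi : i ∈ t <;> simp [hi]

theorem qClosed_iff {m : ℕ} {S : Set (Fin m → Bool)} :
    QClosed m S ↔ S.Nonempty ∧ ∀ u ∈ S, ∀ d ≤ m, ∃ y ∈ S, hammingDist u y = d := by
  refine and_congr_right fun _ => forall₂_congr fun u _ => ⟨fun h d hd => ?_, fun h v => ?_⟩
  · obtain ⟨v, rfl⟩ := exists_hammingDist_eq u (d := d) (by simpa using hd)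
    obtain ⟨y, hy, hdist⟩ := h v
    exact ⟨y, hy, hdist.symm⟩
  · have hdist_le : hammingDist u v ≤ m := by simpa using hammingDist_le_card_fintype (x := u)
    obtain ⟨y, hy, hdist⟩ := h _ hdist_le
    exact ⟨y, hy, hdist.symm⟩

theorem QClosed.append_const {x k : ℕ} {S : Set (Fin x → Bool)} (hS : QClosed x S)
    (hk : k ≤ x + 1) :
    QClosed (k + x) {v | ∃ b : Bool, ∃ s ∈ S, v = Fin.append (fun _ => b) s} := by
  rw [qClosed_iff] at hS ⊢
  obtain ⟨⟨s₀, hs₀⟩, hS⟩ := hS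
  refine ⟨⟨_, false, s₀, hs₀, rfl⟩, ?_⟩
  rintro _ ⟨b, s, hs, rfl⟩ d hd
  by_cases hdx : d ≤ x
  · obtain ⟨t, ht, hst⟩ := hS s hs d hdx
    exact ⟨_, ⟨b, t, ht, rfl⟩, by rw [hammingDist_append, hammingDist_self, hst, zero_add]⟩
  · obtain ⟨t, ht, hst⟩ := hS s hs (d - k) (by omega)
    refine ⟨_, ⟨!b, t, ht, rfl⟩, ?_⟩
    rw [hammingDist_append, hammingDist_const_not, Fintype.card_fin, hst]
    omega

theorem Fin.eq_append_iff {α : Type*} {k x : ℕ} {v : Fin (k + x) → α} {a : Fin k → α}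
    {b : Fin x → α} :
    v = Fin.append a b ↔ (∀ i, v (Fin.castAdd x i) = a i) ∧ ∀ j, v (Fin.natAdd k j) = b j := by
  rw [funext_iff, Fin.forall_fin_add]
  simp only [Fin.append_left, Fin.append_right]

theorem doubling_closed (x n : ℕ) (hx1 : n / 2 ≤ x) (hx2 : x < n)
    (S : Set (Fin x → Bool)) (hS : QClosed x S) :
    QClosed n {v : Fin n → Bool | ∃ s ∈ S,
      (∀ j : Fin x, v ⟨n - x + j.val, by have := j.isLt; omega⟩ = s j) ∧
      ((∀ i : Fin n, i.val < n - x → v i = false) ∨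
       (∀ i : Fin n, i.val < n - x → v i = true))} := by
  obtain ⟨k, rfl⟩ : ∃ k, n = k + x := ⟨n - x, by omega⟩
  convert hS.append_const (k := k) (by omega) using 1
  ext v
  simp only [Set.mem_ofPred_eq, Nat.add_sub_cancel, Fin.eq_append_iff, Fin.forall_fin_add,
    Bool.exists_bool, Fin.val_castAdd, Fin.is_lt, Fin.val_natAdd, add_lt_iff_neg_left,
    not_lt_zero, forall_const, IsEmpty.forall_iff, implies_true, and_true]
  aesop
end

section
/- In the cuttlefish graph CF_n (n ≥ 5), the set A = {v_1, ..., v_{⌊n/2⌋−1}} ∪ {u_1, ..., u_{⌊n/2⌋+1}} is a closed set of cardinality 2⌊n/2⌋. -/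
/-- Vertices of the cuttlefish graph `CF_n`: `Sum.inl i` is the cycle vertex
`u_{i+1}` (for `i : Fin n`), `Sum.inr (Sum.inl j)` is the path vertex `v_{j+1}` and
`Sum.inr (Sum.inr j)` is the path vertex `w_{j+1}` (for `j : Fin (n/2 - 1)`). -/
abbrev CFV (n : ℕ) := Fin n ⊕ (Fin (n / 2 - 1) ⊕ Fin (n / 2 - 1))

/-- The generating relation for the edges of `CF_n`: cycle edges `u_i u_{i+1 mod n}`,
pendant edges `u_1 v_1` and `u_2 w_1`, and path edges `v_j v_{j+1}`, `w_j w_{j+1}`. -/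
def cfRel (n : ℕ) : CFV n → CFV n → Prop
  | Sum.inl i, Sum.inl j => (i.val + 1) % n = j.val
  | Sum.inl i, Sum.inr (Sum.inl j) => i.val = 0 ∧ j.val = 0
  | Sum.inl i, Sum.inr (Sum.inr j) => i.val = 1 ∧ j.val = 0
  | Sum.inr (Sum.inl i), Sum.inr (Sum.inl j) => j.val = i.val + 1
  | Sum.inr (Sum.inr i), Sum.inr (Sum.inr j) => j.val = i.val + 1
  | _, _ => False

/-- The cuttlefish graph `CF_n`. -/
def CF (n : ℕ) : SimpleGraph (CFV n) := SimpleGraph.fromRel (cfRel n)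

/-- A nonempty set `U` of vertices of a graph `G` is *closed* if for every `u ∈ U`
and every vertex `x` there is `y ∈ U` with `dist(u,x) = dist(u,y)`. -/
def ClosedSet {V : Type*} (G : SimpleGraph V) (U : Set V) : Prop :=
  U.Nonempty ∧ ∀ u ∈ U, ∀ x : V, ∃ y ∈ U, G.dist u x = G.dist u y

/-!
The graph distance of `CF n` is given by the closed formula `cfDist`: it vanishes only on the
diagonal, changes by at most one along an edge, and every vertex other than the source has a
neighbour one step closer to it; on a graph these three properties characterise `dist u ·`.
With distances explicit, closedness is checked by exhibiting, for `u` in the set and any vertex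
`x`, a vertex of the set at distance `dist u x` from `u`: it can always be found on the half
cycle `u_1, …, u_{⌊n/2⌋+1}` or on the arm `v`.
-/

namespace SimpleGraph

variable {V : Type*} {G : SimpleGraph V}

theorem Walk.le_add_length_of_adj_le {f : V → ℕ} (hf : ∀ p q, G.Adj p q → f q ≤ f p + 1)
    {a b : V} (W : G.Walk a b) : f b ≤ f a + W.length := by
  induction W with
  | nil => simp
  | cons h _ ih => have := hf _ _ h; simp only [Walk.length_cons]; omega

theorem exists_walk_length_eq_of_descent {u : V} {f : V → ℕ} (hzero : ∀ x, f x = 0 → x = u)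
    (hdesc : ∀ x, f x ≠ 0 → ∃ y, G.Adj y x ∧ f y + 1 = f x) (x : V) :
    ∃ W : G.Walk u x, W.length = f x := by
  induction hk : f x using Nat.strong_induction_on generalizing x with
  | _ k ih =>
    rcases Nat.eq_zero_or_pos k with rfl | hpos
    · obtain rfl := hzero x hk
      exact ⟨.nil, rfl⟩
    · obtain ⟨y, hyx, hy⟩ := hdesc x (by omega)
      obtain ⟨W, hW⟩ := ih (f y) (by omega) y rfl
      exact ⟨W.concat hyx, by rw [Walk.length_concat, hW, hy, hk]⟩

theorem dist_eq_of_adj_le_of_descent {u : V} {f : V → ℕ} (hu : f u = 0)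
    (hzero : ∀ x, f x = 0 → x = u) (hf : ∀ p q, G.Adj p q → f q ≤ f p + 1)
    (hdesc : ∀ x, f x ≠ 0 → ∃ y, G.Adj y x ∧ f y + 1 = f x) (x : V) :
    G.dist u x = f x := by
  obtain ⟨W, hW⟩ := exists_walk_length_eq_of_descent hzero hdesc x
  obtain ⟨W', hW'⟩ := W.reachable.exists_walk_length_eq_dist
  have hlower := W'.le_add_length_of_adj_le hf
  have hupper := dist_le W
  omega

end SimpleGraph

def cycDist (n a b : ℕ) : ℕ := min (a - b + (b - a)) (n - (a - b + (b - a)))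

def cfDist (n : ℕ) : CFV n → CFV n → ℕ
  | .inl a, .inl b => cycDist n a b
  | .inl a, .inr (.inl k) => cycDist n a 0 + 1 + k
  | .inl a, .inr (.inr k) => cycDist n a 1 + 1 + k
  | .inr (.inl j), .inl b => cycDist n 0 b + 1 + j
  | .inr (.inl j), .inr (.inl k) => j - k + (k - j)
  | .inr (.inl j), .inr (.inr k) => j + k + 3
  | .inr (.inr j), .inl b => cycDist n 1 b + 1 + j
  | .inr (.inr j), .inr (.inl k) => j + k + 3
  | .inr (.inr j), .inr (.inr k) => j - k + (k - j)

namespace CF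

variable {n : ℕ}

theorem cfRel_inl_inl_iff {a b : Fin n} :
    cfRel n (.inl a) (.inl b) ↔ b.val = a.val + 1 ∨ (a.val + 1 = n ∧ b.val = 0) := by
  rw [cfRel]
  rcases Nat.lt_or_ge (a.val + 1) n with h | h
  · rw [Nat.mod_eq_of_lt h]; omega
  · rw [show a.val + 1 = n by omega, Nat.mod_self]; omega

theorem adj_of_cfRel (hn : 2 ≤ n) {p q : CFV n} (h : cfRel n p q) : (CF n).Adj p q := by
  refine (SimpleGraph.fromRel_adj _ _ _).2 ⟨?_, .inl h⟩
  rintro rfl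
  rcases p with a | j | j
  · rw [cfRel_inl_inl_iff] at h; omega
  all_goals simp [cfRel] at h

theorem cfDist_le_add_one_of_cfRel {p q : CFV n} (h : cfRel n p q) (x : CFV n) :
    cfDist n x q ≤ cfDist n x p + 1 ∧ cfDist n x p ≤ cfDist n x q + 1 := by
  rcases p with a | j | j <;> rcases q with b | k | k <;>
    (first | rw [cfRel_inl_inl_iff] at h | simp only [cfRel] at h) <;>
    rcases x with c | m | m <;> simp only [cfDist, cycDist] <;> omega

theorem cfDist_le_add_one_of_adj (x : CFV n) {p q : CFV n} (h : (CF n).Adj p q) :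
    cfDist n x q ≤ cfDist n x p + 1 := by
  rcases ((SimpleGraph.fromRel_adj _ _ _).1 h).2 with h | h
  exacts [(cfDist_le_add_one_of_cfRel h x).1, (cfDist_le_add_one_of_cfRel h x).2]

theorem cfDist_self (x : CFV n) : cfDist n x x = 0 := by
  rcases x with a | j | j <;> simp [cfDist, cycDist]

theorem eq_of_cfDist_eq_zero {x y : CFV n} (h : cfDist n x y = 0) : y = x := by
  rcases x with a | j | j <;> rcases y with b | k | k <;>
    simp only [cfDist, cycDist] at h <;>
    simp only [reduceCtorEq, Sum.inl.injEq, Sum.inr.injEq] <;> omega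

theorem exists_adj_cycDist_add_one (hn : 2 ≤ n) {c : ℕ} (hc : c < n) (b : Fin n) (hb : c ≠ b) :
    ∃ b' : Fin n, (CF n).Adj (.inl b') (.inl b) ∧ cycDist n c b' + 1 = cycDist n c b := by
  obtain ⟨p, hp⟩ : ∃ p : Fin n, cfRel n (.inl p) (.inl b) := by
    refine ⟨⟨if b.val = 0 then n - 1 else b.val - 1, by split_ifs <;> omega⟩, ?_⟩
    simp only [cfRel_inl_inl_iff]; split_ifs <;> omega
  obtain ⟨s, hs⟩ : ∃ s : Fin n, cfRel n (.inl b) (.inl s) := by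
    refine ⟨⟨if b.val + 1 = n then 0 else b.val + 1, by split_ifs <;> omega⟩, ?_⟩
    simp only [cfRel_inl_inl_iff]; split_ifs <;> omega
  have hp' := adj_of_cfRel (by omega) hp
  have hs' := (adj_of_cfRel (by omega) hs).symm
  rw [cfRel_inl_inl_iff] at hp hs
  by_cases h : cycDist n c p + 1 = cycDist n c b
  · exact ⟨p, hp', h⟩
  · refine ⟨s, hs', ?_⟩
    simp only [cycDist] at h ⊢
    rcases hp with hp | hp <;> rcases hs with hs | hs <;>
      rcases Nat.lt_or_gt_of_ne hb with hcb | hcb <;> omega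

theorem exists_adj_inl_cfDist_add_one (hn : 2 ≤ n) (x : CFV n) (b : Fin n)
    (hxb : cfDist n x (.inl b) ≠ 0) :
    ∃ z, (CF n).Adj z (.inl b) ∧ cfDist n x z + 1 = cfDist n x (.inl b) := by
  rcases x with a | j | j
  · have hab : a.val ≠ b := fun h => hxb (by simp [cfDist, cycDist, h])
    obtain ⟨b', hb'b, hb'⟩ := exists_adj_cycDist_add_one hn a.isLt b hab
    exact ⟨.inl b', hb'b, hb'⟩
  · by_cases hb : b.val = 0
    · refine ⟨.inr (.inl ⟨0, by have := j.isLt; omega⟩),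
        (adj_of_cfRel hn (by simp [cfRel, hb])).symm, ?_⟩
      simp only [cfDist, cycDist]; omega
    · obtain ⟨b', hb'b, hb'⟩ := exists_adj_cycDist_add_one hn (by omega) b (Ne.symm hb)
      exact ⟨.inl b', hb'b, by simp only [cfDist]; omega⟩
  · by_cases hb : b.val = 1
    · refine ⟨.inr (.inr ⟨0, by have := j.isLt; omega⟩),
        (adj_of_cfRel hn (by simp [cfRel, hb])).symm, ?_⟩
      simp only [cfDist, cycDist]; omega
    · obtain ⟨b', hb'b, hb'⟩ := exists_adj_cycDist_add_one hn (by omega) b (Ne.symm hb)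
      exact ⟨.inl b', hb'b, by simp only [cfDist]; omega⟩

theorem exists_adj_inr_inl_cfDist_add_one (hn : 2 ≤ n) (x : CFV n) (k : Fin (n / 2 - 1))
    (hxk : cfDist n x (.inr (.inl k)) ≠ 0) :
    ∃ z, (CF n).Adj z (.inr (.inl k)) ∧ cfDist n x z + 1 = cfDist n x (.inr (.inl k)) := by
  have hadj : ∀ {p q : CFV n}, cfRel n p q → (CF n).Adj p q := adj_of_cfRel hn
  rcases x with a | j | j
  · by_cases hk : k.val = 0
    · refine ⟨.inl ⟨0, by omega⟩, hadj (by simp [cfRel, hk]), ?_⟩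
      simp only [cfDist]; omega
    · refine ⟨.inr (.inl ⟨k - 1, by omega⟩), hadj (by simp only [cfRel]; omega), ?_⟩
      simp only [cfDist]; omega
  · simp only [cfDist] at hxk ⊢
    by_cases hjk : k < j
    · exact ⟨.inr (.inl ⟨k + 1, by omega⟩), (hadj (by simp [cfRel])).symm, by simp only; omega⟩
    · exact ⟨.inr (.inl ⟨k - 1, by omega⟩), hadj (by simp only [cfRel]; omega),
        by simp only; omega⟩
  · by_cases hk : k.val = 0
    · refine ⟨.inl ⟨0, by omega⟩, hadj (by simp [cfRel, hk]), ?_⟩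
      simp only [cfDist, cycDist]; omega
    · refine ⟨.inr (.inl ⟨k - 1, by omega⟩), hadj (by simp only [cfRel]; omega), ?_⟩
      simp only [cfDist]; omega

theorem exists_adj_inr_inr_cfDist_add_one (hn : 2 ≤ n) (x : CFV n) (k : Fin (n / 2 - 1))
    (hxk : cfDist n x (.inr (.inr k)) ≠ 0) :
    ∃ z, (CF n).Adj z (.inr (.inr k)) ∧ cfDist n x z + 1 = cfDist n x (.inr (.inr k)) := by
  have hadj : ∀ {p q : CFV n}, cfRel n p q → (CF n).Adj p q := adj_of_cfRel hn
  rcases x with a | j | j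
  · by_cases hk : k.val = 0
    · refine ⟨.inl ⟨1, by omega⟩, hadj (by simp [cfRel, hk]), ?_⟩
      simp only [cfDist]; omega
    · refine ⟨.inr (.inr ⟨k - 1, by omega⟩), hadj (by simp only [cfRel]; omega), ?_⟩
      simp only [cfDist]; omega
  · by_cases hk : k.val = 0
    · refine ⟨.inl ⟨1, by omega⟩, hadj (by simp [cfRel, hk]), ?_⟩
      simp only [cfDist, cycDist]; omega
    · refine ⟨.inr (.inr ⟨k - 1, by omega⟩), hadj (by simp only [cfRel]; omega), ?_⟩
      simp only [cfDist]; omega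
  · simp only [cfDist] at hxk ⊢
    by_cases hjk : k < j
    · exact ⟨.inr (.inr ⟨k + 1, by omega⟩), (hadj (by simp [cfRel])).symm, by simp only; omega⟩
    · exact ⟨.inr (.inr ⟨k - 1, by omega⟩), hadj (by simp only [cfRel]; omega),
        by simp only; omega⟩

theorem exists_adj_cfDist_add_one (hn : 2 ≤ n) (x y : CFV n) (hxy : cfDist n x y ≠ 0) :
    ∃ z, (CF n).Adj z y ∧ cfDist n x z + 1 = cfDist n x y := by
  rcases y with b | k | k
  exacts [exists_adj_inl_cfDist_add_one hn x b hxy, exists_adj_inr_inl_cfDist_add_one hn x k hxy,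
    exists_adj_inr_inr_cfDist_add_one hn x k hxy]

theorem dist_eq (hn : 2 ≤ n) (x y : CFV n) : (CF n).dist x y = cfDist n x y :=
  SimpleGraph.dist_eq_of_adj_le_of_descent (cfDist_self x) (fun _ => eq_of_cfDist_eq_zero)
    (fun _ _ => cfDist_le_add_one_of_adj x) (exists_adj_cfDist_add_one hn x) y

def armAndHalfCycle (n : ℕ) : Set (CFV n) :=
  (Set.range fun j : Fin (n / 2 - 1) => (Sum.inr (Sum.inl j) : CFV n)) ∪
    {x : CFV n | ∃ i : Fin n, i.val ≤ n / 2 ∧ x = Sum.inl i}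

theorem inl_mem_armAndHalfCycle {i : Fin n} (hi : i.val ≤ n / 2) :
    (.inl i : CFV n) ∈ armAndHalfCycle n :=
  .inr ⟨i, hi, rfl⟩

theorem inr_inl_mem_armAndHalfCycle (j : Fin (n / 2 - 1)) :
    (.inr (.inl j) : CFV n) ∈ armAndHalfCycle n :=
  .inl ⟨j, rfl⟩

theorem exists_mem_cfDist_eq_of_inl {i : Fin n} (hi : i.val ≤ n / 2) (x : CFV n) :
    ∃ y ∈ armAndHalfCycle n, cfDist n (.inl i) x = cfDist n (.inl i) y := by
  rcases x with b | k | k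
  · have hd : cycDist n i b ≤ n / 2 := by simp only [cycDist]; omega
    by_cases hdi : cycDist n i b ≤ i
    · refine ⟨.inl ⟨i - cycDist n i b, by omega⟩,
        inl_mem_armAndHalfCycle (by simp only; omega), ?_⟩
      simp only [cfDist, cycDist] at hdi hd ⊢; omega
    by_cases hi0 : i.val = 0
    · refine ⟨.inl ⟨cycDist n i b, by omega⟩, inl_mem_armAndHalfCycle (by simpa), ?_⟩
      simp only [cfDist, cycDist] at hdi hd ⊢; omega
    · refine ⟨.inr (.inl ⟨cycDist n i b - i - 1, by omega⟩), inr_inl_mem_armAndHalfCycle _, ?_⟩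
      simp only [cfDist, cycDist] at hdi hd ⊢; omega
  · exact ⟨_, inr_inl_mem_armAndHalfCycle k, rfl⟩
  · by_cases hi0 : i.val = 0
    · refine ⟨.inl ⟨k + 2, by omega⟩, inl_mem_armAndHalfCycle (by simp only; omega), ?_⟩
      simp only [cfDist, cycDist]; omega
    by_cases hk0 : k.val = 0
    · refine ⟨.inl ⟨0, by omega⟩, inl_mem_armAndHalfCycle (by simp), ?_⟩
      simp only [cfDist, cycDist]; omega
    · refine ⟨.inr (.inl ⟨k - 1, by omega⟩), inr_inl_mem_armAndHalfCycle _, ?_⟩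
      simp only [cfDist, cycDist]; omega

theorem exists_mem_cfDist_eq_of_inr_inl (j : Fin (n / 2 - 1)) (x : CFV n) :
    ∃ y ∈ armAndHalfCycle n, cfDist n (.inr (.inl j)) x = cfDist n (.inr (.inl j)) y := by
  rcases x with b | k | k
  · refine ⟨.inl ⟨cycDist n 0 b, by simp only [cycDist]; omega⟩,
      inl_mem_armAndHalfCycle (by simp only [cycDist]; omega), ?_⟩
    simp only [cfDist, cycDist]; omega
  · exact ⟨_, inr_inl_mem_armAndHalfCycle k, rfl⟩
  · refine ⟨.inl ⟨k + 2, by omega⟩, inl_mem_armAndHalfCycle (by simp only; omega), ?_⟩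
    simp only [cfDist, cycDist]; omega

theorem closedSet_armAndHalfCycle (hn : 2 ≤ n) : ClosedSet (CF n) (armAndHalfCycle n) := by
  refine ⟨⟨_, inl_mem_armAndHalfCycle (i := ⟨0, by omega⟩) (Nat.zero_le _)⟩, ?_⟩
  rintro u (⟨j, rfl⟩ | ⟨i, hi, rfl⟩) x <;> simp only [dist_eq hn]
  exacts [exists_mem_cfDist_eq_of_inr_inl j x, exists_mem_cfDist_eq_of_inl hi x]

theorem ncard_armAndHalfCycle (hn : 2 ≤ n) : (armAndHalfCycle n).ncard = 2 * (n / 2) := by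
  have hv : (Set.range fun j : Fin (n / 2 - 1) => (Sum.inr (Sum.inl j) : CFV n)).ncard =
      n / 2 - 1 := by
    rw [Set.ncard_range_of_injective (fun _ _ h => by simpa using h), Nat.card_eq_fintype_card,
      Fintype.card_fin]
  have hu : {x : CFV n | ∃ i : Fin n, i.val ≤ n / 2 ∧ x = Sum.inl i}.ncard = n / 2 + 1 := by
    have : {x : CFV n | ∃ i : Fin n, i.val ≤ n / 2 ∧ x = Sum.inl i} =
        Sum.inl '' ↑(Finset.Iic (⟨n / 2, by omega⟩ : Fin n)) := by
      ext x; simp [Fin.le_def, eq_comm]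
    rw [this, Set.ncard_image_of_injective _ Sum.inl_injective, Set.ncard_coe_finset,
      Fin.card_Iic]
  have hdisj : Disjoint (Set.range fun j : Fin (n / 2 - 1) => (Sum.inr (Sum.inl j) : CFV n))
      {x : CFV n | ∃ i : Fin n, i.val ≤ n / 2 ∧ x = Sum.inl i} := by
    simp [Set.disjoint_left]
  rw [armAndHalfCycle, Set.ncard_union_eq hdisj, hv, hu]
  omega

end CF

theorem cuttlefish_closed_set (n : ℕ) (hn : 5 ≤ n) :
    ClosedSet (CF n)
      ((Set.range fun j : Fin (n / 2 - 1) => (Sum.inr (Sum.inl j) : CFV n)) ∪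
        {x : CFV n | ∃ i : Fin n, i.val ≤ n / 2 ∧ x = Sum.inl i}) ∧
    ((Set.range fun j : Fin (n / 2 - 1) => (Sum.inr (Sum.inl j) : CFV n)) ∪
        {x : CFV n | ∃ i : Fin n, i.val ≤ n / 2 ∧ x = Sum.inl i}).ncard = 2 * (n / 2) :=
  ⟨CF.closedSet_armAndHalfCycle (by omega), CF.ncard_armAndHalfCycle (by omega)⟩
end
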